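/- arXiv:2506.15106 — 2 statements merged into one kernel-verified Lean document; each statement's English description precedes it below -/
import Mathlib

section
/- For every positive integer t, every γ ∈ (0,1), every v ∈ (0,2), and every integer p with 0 ≤ p < t, the inequality γ^{(t-p)/2}/(p+1)^v ≤ 1/(a·t^v) holds, where a = (ln(√γ)·e)²/4. -/
theorem stmt3 (t p : ℕ) (hp : p < t) (γ v : ℝ) (hγ : γ ∈ Set.Ioo (0:ℝ) 1)
    (hv : v ∈ Set.Ioo (0:ℝ) 2) :
    γ ^ (((t : ℝ) - (p : ℝ)) / 2) / ((p : ℝ) + 1) ^ v ≤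
      1 / ((Real.log (Real.sqrt γ) * Real.exp 1) ^ 2 / 4 * (t : ℝ) ^ v) := by
  obtain ⟨hγ0, hγ1⟩ := hγ
  obtain ⟨hv0, hv2⟩ := hv
  have ht0 : (0:ℝ) < t := by exact_mod_cast Nat.pos_of_ne_zero (by omega)
  set n : ℝ := (t:ℝ) - (p:ℝ) with hn_def
  have hn1 : 1 ≤ n := by
    have : (p:ℝ) + 1 ≤ t := by exact_mod_cast Nat.succ_le_of_lt hp
    simp only [hn_def]; linarith
  have hn0 : 0 < n := by linarith
  have hp0 : (0:ℝ) ≤ p := Nat.cast_nonneg p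
  have hsγ : Real.log (Real.sqrt γ) < 0 := by
    apply Real.log_neg (Real.sqrt_pos.mpr hγ0)
    rw [show (1:ℝ) = Real.sqrt 1 from (Real.sqrt_one).symm]
    exact Real.sqrt_lt_sqrt hγ0.le hγ1
  set c : ℝ := -Real.log (Real.sqrt γ) with hc_def
  have hc0 : 0 < c := by simp only [hc_def]; linarith
  clear_value n c
  have he : 0 < Real.exp 1 := Real.exp_pos 1
  -- Step A: rewrite the power as an exponential
  have hA : γ ^ (n / 2) = Real.exp (-(c * n)) := by
    rw [Real.rpow_def_of_pos hγ0]
    congr 1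
    have hlog : Real.log (Real.sqrt γ) = Real.log γ / 2 := Real.log_sqrt hγ0.le
    have : c = -(Real.log γ / 2) := by rw [hc_def, hlog]
    rw [this]; ring
  -- Step B: (y e)^2/4 ≤ exp y for y ≥ 0, with y = c*n
  have hB : (c * n * Real.exp 1)^2 / 4 ≤ Real.exp (c * n) := by
    have h1 : Real.exp 1 * (c * n / 2) ≤ Real.exp (c * n / 2) := by
      have h := Real.add_one_le_exp (c * n / 2 - 1)
      calc Real.exp 1 * (c * n / 2) = Real.exp 1 * ((c*n/2 - 1) + 1) := by ring_nf
        _ ≤ Real.exp 1 * Real.exp (c*n/2 - 1) :=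
            mul_le_mul_of_nonneg_left h he.le
        _ = Real.exp (c * n / 2) := by rw [← Real.exp_add]; ring_nf
    have h2 : (Real.exp 1 * (c * n / 2))^2 ≤ (Real.exp (c * n / 2))^2 :=
      pow_le_pow_left₀ (by positivity) h1 2
    calc (c * n * Real.exp 1)^2 / 4 = (Real.exp 1 * (c*n/2))^2 := by ring
      _ ≤ (Real.exp (c*n/2))^2 := h2
      _ = Real.exp (c*n) := by rw [sq, ← Real.exp_add]; ring_nf
  have hK : 0 < (c * n * Real.exp 1)^2 := by positivity
  have hexp : Real.exp (-(c*n)) ≤ 4 / (c * n * Real.exp 1)^2 := by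
    rw [le_div_iff₀ hK]
    have hprod : Real.exp (-(c*n)) * Real.exp (c*n) = 1 := by
      rw [← Real.exp_add]; simp
    have hB' : (c * n * Real.exp 1)^2 ≤ 4 * Real.exp (c*n) := by linarith
    nlinarith [mul_le_mul_of_nonneg_left hB' (Real.exp_pos (-(c*n))).le, hprod]
  -- Step C: t^v ≤ n^2 * (p+1)^v
  have hq0 : (0:ℝ) < (p:ℝ) + 1 := by linarith
  have htv : (t:ℝ)^v ≤ n^2 * ((p:ℝ)+1)^v := by
    calc (t:ℝ)^v ≤ (n * ((p:ℝ)+1))^v := by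
          apply Real.rpow_le_rpow ht0.le _ hv0.le
          nlinarith
      _ = n^v * ((p:ℝ)+1)^v := Real.mul_rpow hn0.le hq0.le
      _ ≤ n^2 * ((p:ℝ)+1)^v := by
          have h : n^v ≤ n^(2:ℝ) := Real.rpow_le_rpow_of_exponent_le hn1 hv2.le
          rw [show (2:ℝ) = ((2:ℕ):ℝ) by norm_num, Real.rpow_natCast] at h
          exact mul_le_mul_of_nonneg_right h (Real.rpow_nonneg hq0.le v)
  have hsq : (Real.log (Real.sqrt γ) * Real.exp 1)^2 = (c * Real.exp 1)^2 := by
    rw [hc_def]; ring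
  rw [hsq, hA]
  have hP : 0 < ((p:ℝ)+1)^v := Real.rpow_pos_of_pos hq0 v
  have hTv : 0 < (t:ℝ)^v := Real.rpow_pos_of_pos ht0 v
  calc Real.exp (-(c*n)) / ((p:ℝ)+1)^v
      ≤ (4 / (c * n * Real.exp 1)^2) / ((p:ℝ)+1)^v := by gcongr
    _ = 4 / ((c * n * Real.exp 1)^2 * ((p:ℝ)+1)^v) := by rw [div_div]
    _ ≤ 4 / ((c * Real.exp 1)^2 * (t:ℝ)^v) := by
        apply div_le_div_of_nonneg_left (by norm_num) (by positivity)
        nlinarith [mul_le_mul_of_nonneg_left htv (sq_nonneg (c * Real.exp 1))]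
    _ = 1 / ((c * Real.exp 1)^2 / 4 * (t:ℝ)^v) := by
        rw [one_div, div_eq_inv_mul]
        field_simp
end

section
/- Suppose a nonnegative real sequence (V^t) satisfies V^{t+1} ≤ (1 − c·λ^t) V^t + C/(t+1)^{r} for all t ≥ 0, where λ^t = λ⁰/(t+1)^{v} with v ∈ (0,1), c > 0, λ⁰ > 0, C > 0, and r > v. Then there exists a constant K > 0 such that V^t ≤ K/(t+1)^{r−v} for all t ≥ 1. -/
lemma aux_pow_chung (n : ℕ) (x : ℝ) (hx : 0 ≤ x) (hx1 : x ≤ 1) :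
    (1 + x) ^ n ≤ 1 + ((2:ℝ) ^ n - 1) * x := by
  induction n with
  | zero => simp
  | succ n ih =>
    have h2 : (1:ℝ) ≤ 2 ^ n := one_le_pow₀ (by norm_num)
    have hxx : x * x ≤ x := by nlinarith
    calc (1 + x) ^ (n + 1) = (1 + x) ^ n * (1 + x) := pow_succ _ _
      _ ≤ (1 + ((2:ℝ)^n - 1) * x) * (1 + x) :=
          mul_le_mul_of_nonneg_right ih (by linarith)
      _ ≤ 1 + ((2:ℝ)^(n+1) - 1) * x := by ring_nf; nlinarith

set_option maxHeartbeats 1600000 in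
theorem stmt12 (V : ℕ → ℝ) (hV : ∀ t, 0 ≤ V t) (c lam0 C r v : ℝ)
    (hc : 0 < c) (hl : 0 < lam0) (hC : 0 < C) (hv : v ∈ Set.Ioo (0:ℝ) 1) (hr : v < r)
    (hrec : ∀ t : ℕ,
      V (t + 1) ≤ (1 - c * (lam0 / ((t : ℝ) + 1) ^ v)) * V t + C / ((t : ℝ) + 1) ^ r) :
    ∃ K : ℝ, 0 < K ∧ ∀ t : ℕ, 1 ≤ t → V t ≤ K / ((t : ℝ) + 1) ^ (r - v) := by
  obtain ⟨hv0, hv1⟩ := hv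
  obtain ⟨p, hp_def⟩ : ∃ p : ℝ, p = r - v := ⟨_, rfl⟩
  rw [← hp_def]
  have hp : 0 < p := by rw [hp_def]; linarith
  obtain ⟨M, hM_def⟩ : ∃ M : ℝ, M = 2 ^ ⌈p⌉₊ - 1 := ⟨_, rfl⟩
  have h2n : (1:ℝ) ≤ 2 ^ ⌈p⌉₊ := one_le_pow₀ (by norm_num)
  have hM0 : 0 ≤ M := by rw [hM_def]; linarith
  have hcl : 0 < c * lam0 := mul_pos hc hl
  have hu : ∀ t : ℕ, (0:ℝ) < (t:ℝ) + 1 := fun t => by positivity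
  have huv : ∀ t : ℕ, (0:ℝ) < ((t:ℝ) + 1) ^ v := fun t => Real.rpow_pos_of_pos (hu t) _
  have hup : ∀ t : ℕ, (0:ℝ) < ((t:ℝ) + 1) ^ p := fun t => Real.rpow_pos_of_pos (hu t) _
  -- the ratio bound
  have hq : ∀ t : ℕ, (((t:ℝ) + 2) / ((t:ℝ) + 1)) ^ p ≤ 1 + M / ((t:ℝ) + 1) := by
    intro t
    have hx : (0:ℝ) ≤ 1 / ((t:ℝ) + 1) := by positivity
    have hx1 : 1 / ((t:ℝ) + 1) ≤ 1 := by
      rw [div_le_one (hu t)]; linarith [Nat.cast_nonneg (α := ℝ) t]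
    have hb : ((t:ℝ) + 2) / ((t:ℝ) + 1) = 1 + 1 / ((t:ℝ) + 1) := by
      field_simp; ring
    have hb1 : (1:ℝ) ≤ 1 + 1 / ((t:ℝ) + 1) := by linarith
    calc (((t:ℝ) + 2) / ((t:ℝ) + 1)) ^ p = (1 + 1/((t:ℝ)+1)) ^ p := by rw [hb]
      _ ≤ (1 + 1/((t:ℝ)+1)) ^ ((⌈p⌉₊ : ℕ) : ℝ) :=
          Real.rpow_le_rpow_of_exponent_le hb1 (Nat.le_ceil p)
      _ = (1 + 1/((t:ℝ)+1)) ^ (⌈p⌉₊ : ℕ) := Real.rpow_natCast _ _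
      _ ≤ 1 + ((2:ℝ) ^ ⌈p⌉₊ - 1) * (1/((t:ℝ)+1)) := aux_pow_chung _ _ hx hx1
      _ = 1 + M / ((t:ℝ)+1) := by rw [hM_def]; ring
  -- choose T
  have h0 : Filter.Tendsto (fun t : ℕ => (t:ℝ) + 1) Filter.atTop Filter.atTop :=
    Filter.tendsto_atTop_add_const_right _ 1 tendsto_natCast_atTop_atTop
  have h1 : Filter.Tendsto (fun t : ℕ => ((t:ℝ) + 1) ^ (1 - v)) Filter.atTop Filter.atTop :=
    (tendsto_rpow_atTop (by linarith)).comp h0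
  have h2 : Filter.Tendsto (fun t : ℕ => ((t:ℝ) + 1) ^ v) Filter.atTop Filter.atTop :=
    (tendsto_rpow_atTop hv0).comp h0
  obtain ⟨T, hT⟩ := (Filter.eventually_atTop).mp
    ((h1.eventually_ge_atTop (2 * M / (c * lam0))).and (h2.eventually_ge_atTop (c * lam0 / 2)))
  obtain ⟨K0, hK0_def⟩ : ∃ K0 : ℝ, K0 = 2 * C * (1 + M) / (c * lam0) := ⟨_, rfl⟩
  have hK0 : 0 < K0 := by rw [hK0_def]; positivity
  -- key one-step inequality for t ≥ T
  have key : ∀ t : ℕ, T ≤ t →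
      V (t+1) * (((t:ℝ)+1) + 1) ^ p ≤
        (1 - c * lam0 / ((t:ℝ)+1) ^ v / 2) * (V t * ((t:ℝ)+1) ^ p)
          + (c * lam0 / ((t:ℝ)+1) ^ v / 2) * K0 := by
    intro t ht
    obtain ⟨hT1, hT2⟩ := hT t ht
    obtain ⟨u, hu_def⟩ : ∃ u : ℝ, u = (t:ℝ) + 1 := ⟨_, rfl⟩
    have hu0 : 0 < u := hu_def ▸ hu t
    obtain ⟨a, ha_def⟩ : ∃ a : ℝ, a = c * lam0 / u ^ v := ⟨_, rfl⟩
    have huv0 : 0 < u ^ v := Real.rpow_pos_of_pos hu0 _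
    have ha0 : 0 < a := by rw [ha_def]; positivity
    obtain ⟨q, hq_def⟩ : ∃ q : ℝ, q = ((u + 1) / u) ^ p := ⟨_, rfl⟩
    rw [← hu_def, ← ha_def]
    have hq1 : 1 ≤ q := by
      have h := Real.rpow_le_rpow_of_exponent_le
        (by rw [le_div_iff₀ hu0]; linarith : (1:ℝ) ≤ (u+1)/u) hp.le
      rw [Real.rpow_zero] at h
      rw [hq_def]; exact h
    have hqM : q ≤ 1 + M / u := by
      rw [hq_def, hu_def, show ((t:ℝ)+1) + 1 = (t:ℝ) + 2 by ring]
      exact hq t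
    -- M/u ≤ a/2
    have hMa : M / u ≤ a / 2 := by
      have h1v : u ^ (1 - v) * u ^ v = u := by
        rw [← Real.rpow_add hu0]; simp
      have hT1' : 2 * M / (c * lam0) ≤ u ^ (1 - v) := by rw [hu_def]; exact hT1
      have h' : 2 * M ≤ c * lam0 * u ^ (1 - v) := by
        rw [div_le_iff₀ hcl] at hT1'; linarith
      rw [ha_def, div_le_div_iff₀ hu0 two_pos, div_mul_eq_mul_div, le_div_iff₀ huv0]
      calc M * 2 * u ^ v ≤ (c * lam0 * u ^ (1-v)) * u ^ v :=
            mul_le_mul_of_nonneg_right (by linarith) huv0.le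
        _ = c * lam0 * u := by rw [mul_assoc, h1v]
    -- (u+1)^p = q * u^p
    have hsplit : (u + 1) ^ p = q * u ^ p := by
      rw [hq_def, ← Real.mul_rpow (by positivity) hu0.le, div_mul_cancel₀]
      exact hu0.ne'
    -- u^p / u^r = 1 / u^v
    have hpr : u ^ p / u ^ r = 1 / u ^ v := by
      rw [← Real.rpow_sub hu0, hp_def, show r - v - r = -v by ring,
        Real.rpow_neg hu0.le, one_div]
    -- from hrec
    have hrec' : V (t+1) ≤ (1 - a) * V t + C / u ^ r := by
      rw [ha_def, hu_def, mul_div_assoc]; exact hrec t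
    have step1 : V (t+1) * (u + 1) ^ p ≤ ((1 - a) * V t + C / u ^ r) * (u + 1) ^ p :=
      mul_le_mul_of_nonneg_right hrec' (by positivity)
    have step2 : ((1 - a) * V t + C / u ^ r) * (u + 1) ^ p
        = ((1 - a) * q) * (V t * u ^ p) + C * q * (1 / u ^ v) := by
      rw [hsplit, ← hpr]; ring
    have hcontr : (1 - a) * q ≤ 1 - a / 2 := by
      rcases le_or_gt a 1 with h | h
      · have hMu0 : 0 ≤ M / u := by positivity
        nlinarith [mul_le_mul_of_nonneg_left hqM (by linarith : (0:ℝ) ≤ 1 - a)]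
      · nlinarith [mul_le_mul_of_nonneg_left hq1 (by linarith : (0:ℝ) ≤ a - 1)]
    have hWp : 0 ≤ V t * u ^ p :=
      mul_nonneg (hV t) (Real.rpow_pos_of_pos hu0 _).le
    have hadd : C * q * (1 / u ^ v) ≤ (a / 2) * K0 := by
      have hu1 : (1:ℝ) ≤ u := by rw [hu_def]; linarith [Nat.cast_nonneg (α := ℝ) t]
      have hqB : q ≤ 1 + M := by
        have hMuM : M / u ≤ M := by
          rw [div_le_iff₀ hu0]; nlinarith [hM0, hu1]
        linarith
      have heq : (a / 2) * K0 = C * (1 + M) * (1 / u ^ v) := by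
        rw [ha_def, hK0_def]
        field_simp
      rw [heq]
      exact mul_le_mul_of_nonneg_right
        (mul_le_mul_of_nonneg_left hqB hC.le) (by positivity)
    calc V (t+1) * (u + 1) ^ p ≤ ((1 - a) * q) * (V t * u ^ p) + C * q * (1 / u ^ v) := by
          rw [← step2]; exact step1
      _ ≤ (1 - a / 2) * (V t * u ^ p) + (a / 2) * K0 :=
          add_le_add (mul_le_mul_of_nonneg_right hcontr hWp) hadd
  -- bounded for t ≥ T
  obtain ⟨B, hB_def⟩ : ∃ B : ℝ, B = max (V T * ((T:ℝ)+1) ^ p) K0 := ⟨_, rfl⟩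
  have hBK0 : K0 ≤ B := hB_def ▸ le_max_right _ _
  have hbound : ∀ t : ℕ, T ≤ t → V t * ((t:ℝ)+1) ^ p ≤ B := by
    intro t ht
    induction t, ht using Nat.le_induction with
    | base => exact hB_def ▸ le_max_left _ _
    | succ t ht ih =>
      have h := key t ht
      obtain ⟨_, hT2⟩ := hT t ht
      have ha0 : 0 < c * lam0 / ((t:ℝ)+1) ^ v := by positivity
      have ha2 : c * lam0 / ((t:ℝ)+1) ^ v ≤ 2 := by
        rw [div_le_iff₀ (huv t)]; linarith
      have hcast : (((t+1:ℕ):ℝ) + 1) = ((t:ℝ) + 1) + 1 := by push_cast; ring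
      rw [hcast]
      calc V (t+1) * (((t:ℝ)+1) + 1) ^ p
          ≤ (1 - c * lam0 / ((t:ℝ)+1) ^ v / 2) * (V t * ((t:ℝ)+1) ^ p)
            + (c * lam0 / ((t:ℝ)+1) ^ v / 2) * K0 := h
        _ ≤ (1 - c * lam0 / ((t:ℝ)+1) ^ v / 2) * B
            + (c * lam0 / ((t:ℝ)+1) ^ v / 2) * B := by
            have h1 : (0:ℝ) ≤ 1 - c * lam0 / ((t:ℝ)+1) ^ v / 2 := by linarith
            have h2 : (0:ℝ) ≤ c * lam0 / ((t:ℝ)+1) ^ v / 2 := by positivity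
            have g1 := mul_le_mul_of_nonneg_left ih h1
            have g2 := mul_le_mul_of_nonneg_left hBK0 h2
            linarith
        _ = B := by ring
  -- take max over small t
  have hrangene : (Finset.range (T + 1)).Nonempty := ⟨0, by simp⟩
  obtain ⟨S, hS_def⟩ : ∃ S : ℝ,
      S = (Finset.range (T + 1)).sup' hrangene (fun t => V t * ((t:ℝ)+1) ^ p) := ⟨_, rfl⟩
  refine ⟨max 1 (max B S), lt_of_lt_of_le one_pos (le_max_left _ _), ?_⟩
  intro t ht
  rw [le_div_iff₀ (hup t)]
  rcases le_or_gt T t with h | h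
  · calc V t * ((t:ℝ)+1) ^ p ≤ B := hbound t h
      _ ≤ max 1 (max B S) := le_trans (le_max_left _ _) (le_max_right _ _)
  · have hmem : t ∈ Finset.range (T + 1) := Finset.mem_range.mpr (by omega)
    calc V t * ((t:ℝ)+1) ^ p ≤ S := hS_def ▸ Finset.le_sup' (f := fun t : ℕ => V t * ((t:ℝ)+1) ^ p) hmem
      _ ≤ max 1 (max B S) := le_trans (le_max_right _ _) (le_max_right _ _)
end
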